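/- arXiv:1704.05626 — 7 statements merged into one kernel-verified Lean document; each statement's English description precedes it below -/
import Mathlib

section
/- If H = (h_1, ..., h_d) is a tuple of d mutually orthogonal nonzero vectors in ℚ^d (a representation of a perfect half space), then for every nonzero a ∈ ℚ^d, exactly one of a · H ≺ 0 or (-a) · H ≺ 0 holds. In other words, the perfect half space and its negation partition ℚ^d \ {0}. -/
open Matrix

lemma not_lex_cons (x y : ℚ) (t s : List ℚ) (h1 : ¬ x < y)
    (h2 : x = y → ¬ List.Lex (· < ·) t s) : ¬ List.Lex (· < ·) (x :: t) (y :: s) := by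
  intro h
  cases h with
  | rel h' => exact h1 h'
  | cons h' => exact h2 rfl h'

lemma lex_neg_aux (l : List ℚ) (h : ∃ x ∈ l, x ≠ 0) :
    Xor' (List.Lex (· < ·) l (List.replicate l.length (0 : ℚ)))
         (List.Lex (· < ·) (l.map Neg.neg) (List.replicate l.length (0 : ℚ))) := by
  induction l with
  | nil => simp at h
  | cons x t ih =>
    simp only [List.length_cons, List.replicate_succ, List.map_cons]
    rcases lt_trichotomy x 0 with hx | hx | hx
    · left
      refine ⟨List.Lex.rel hx, not_lex_cons _ _ _ _ (by linarith) (fun h _ => by linarith)⟩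
    · subst hx
      obtain ⟨y, hy, hy0⟩ := h
      simp at hy
      rcases hy with rfl | hy
      · exact absurd rfl hy0
      have := ih ⟨y, hy, hy0⟩
      rcases this with ⟨h1, h2⟩ | ⟨h1, h2⟩
      · left
        constructor
        · exact List.Lex.cons h1
        · intro hc
          cases hc with
          | rel h' => simp at h'
          | cons h' => exact h2 h'
      · right
        constructor
        · exact List.Lex.cons (by simpa using h1)
        · intro hc
          cases hc with
          | rel h' => simp at h'
          | cons h' => exact h2 h'
    · right
      exact ⟨List.Lex.rel (by linarith), not_lex_cons _ _ _ _ (by linarith) (fun h _ => by linarith)⟩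

/-- For a perfect half space representation `H` (mutually orthogonal nonzero vectors),
every nonzero `a` satisfies exactly one of `a · H ≺ 0` and `(-a) · H ≺ 0`. -/
theorem stmt3 (d : ℕ) (H : Fin d → Fin d → ℚ)
    (horth : ∀ i j, i ≠ j → H i ⬝ᵥ H j = 0) (hnz : ∀ i, H i ≠ 0)
    (a : Fin d → ℚ) (ha : a ≠ 0) :
    Xor' (List.Lex (· < ·) (List.ofFn fun j => a ⬝ᵥ H j) (List.replicate d (0 : ℚ)))
         (List.Lex (· < ·) (List.ofFn fun j => (-a) ⬝ᵥ H j) (List.replicate d (0 : ℚ))) := by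
  set M : Matrix (Fin d) (Fin d) ℚ := Matrix.of H with hM
  have hdet : (M * Mᵀ) = Matrix.diagonal (fun i => H i ⬝ᵥ H i) := by
    ext i j
    by_cases hij : i = j
    · subst hij; simp [Matrix.mul_apply, Matrix.diagonal, hM, dotProduct]
    · simp [Matrix.mul_apply, Matrix.diagonal, hij, hM]
      simpa [dotProduct] using horth i j hij
  have hdetM : M.det ≠ 0 := by
    have h1 : M.det * M.det = ∏ i, (H i ⬝ᵥ H i) := by
      have := congrArg Matrix.det hdet
      simpa [Matrix.det_mul, Matrix.det_transpose, Matrix.det_diagonal] using this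
    have h2 : ∏ i, (H i ⬝ᵥ H i) ≠ 0 := by
      apply Finset.prod_ne_zero_iff.mpr
      intro i _
      simpa [dotProduct_self_eq_zero] using hnz i
    intro h0
    rw [h0, mul_zero] at h1
    exact h2 h1.symm
  -- ∃ j, a ⬝ᵥ H j ≠ 0
  have hex : ∃ j, a ⬝ᵥ H j ≠ 0 := by
    by_contra hc
    push_neg at hc
    have hMa : M *ᵥ a = 0 := by
      ext j
      simpa [Matrix.mulVec, hM, dotProduct_comm] using hc j
    exact ha (Matrix.eq_zero_of_mulVec_eq_zero hdetM hMa)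
  obtain ⟨j, hj⟩ := hex
  have hlen : (List.ofFn fun j => a ⬝ᵥ H j).length = d := by simp
  have hmap : (List.ofFn fun j => (-a) ⬝ᵥ H j) = (List.ofFn fun j => a ⬝ᵥ H j).map Neg.neg := by
    rw [List.map_ofFn]
    congr 1
    funext j
    simp [neg_dotProduct]
  rw [hmap]
  have := lex_neg_aux (List.ofFn fun j => a ⬝ᵥ H j)
    ⟨a ⬝ᵥ H j, by simp [List.mem_ofFn], hj⟩
  simpa [hlen] using this
end

section
/- Let d ≥ 1 and define for a multi-weighted graph with edge weights w ∈ ℤ^d the scalar encoding r_1(w) recursively: r_d(w) = w(d), and r_i(w) = w(i) · (N_{i+1} + 1) + r_{i+1}(w) where N_{i+1} is an integer with N_{i+1} ≥ n · M_{i+1}, n ≥ 1 is a bound on cycle length, and M_{i+1} bounds |r_{i+1}(w)| over all edge weights w. Then for any sequence of at most n weights w_1, ..., w_m (m ≤ n), the sum w_1 + ... + w_m is lexicographically negative (zero, positive, respectively) if and only if r_1(w_1) + ... + r_1(w_m) is negative (zero, positive, respectively). -/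
private lemma abs_list_sum_le (l : List ℤ) : |l.sum| ≤ (l.map abs).sum := by
  induction l with
  | nil => simp
  | cons a l ih =>
    simp only [List.sum_cons, List.map_cons]
    calc |a + l.sum| ≤ |a| + |l.sum| := abs_add_le _ _
      _ ≤ |a| + (l.map abs).sum := by linarith

private lemma lex_lt_zero (l : List ℤ) :
    List.Lex (· < ·) l (List.replicate l.length 0) →
    ∃ k, ∃ h : k < l.length, l.get ⟨k, h⟩ < 0 ∧
      ∀ j, ∀ hj : j < k, l.get ⟨j, hj.trans h⟩ = 0 := by
  induction l with
  | nil => intro h; cases h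
  | cons a l ih =>
    intro h
    rw [List.length_cons, List.replicate_succ] at h
    cases h with
    | rel hab => exact ⟨0, Nat.succ_pos _, hab, fun j hj => absurd hj (Nat.not_lt_zero j)⟩
    | cons h' =>
      obtain ⟨k, hk, hneg, hzero⟩ := ih h'
      refine ⟨k + 1, by simpa using Nat.succ_lt_succ hk, by simpa using hneg, ?_⟩
      intro j hj
      match j with
      | 0 => simp
      | j + 1 => simpa using hzero j (by omega)

private lemma zero_lex_lt (l : List ℤ) :
    List.Lex (· < ·) (List.replicate l.length 0) l →
    ∃ k, ∃ h : k < l.length, 0 < l.get ⟨k, h⟩ ∧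
      ∀ j, ∀ hj : j < k, l.get ⟨j, hj.trans h⟩ = 0 := by
  induction l with
  | nil => intro h; cases h
  | cons a l ih =>
    intro h
    rw [List.length_cons, List.replicate_succ] at h
    cases h with
    | rel hab => exact ⟨0, Nat.succ_pos _, hab, fun j hj => absurd hj (Nat.not_lt_zero j)⟩
    | cons h' =>
      obtain ⟨k, hk, hpos, hzero⟩ := ih h'
      refine ⟨k + 1, by simpa using Nat.succ_lt_succ hk, by simpa using hpos, ?_⟩
      intro j hj
      match j with
      | 0 => simp
      | j + 1 => simpa using hzero j (by omega)

/-- Sign preservation of the scalar encoding `r_1` of `d`-dimensional weights: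
for a sequence of at most `n` edge weights, the lexicographic sign of the vector
sum agrees with the sign of the sum of encodings. -/
theorem stmt4 (d n : ℕ) (hd : 1 ≤ d) (hn : 1 ≤ n)
    (E : Finset (Fin d → ℤ))
    (r : ℕ → (Fin d → ℤ) → ℤ) (N M : ℕ → ℤ)
    (hrd : ∀ w ∈ E, r (d - 1) w = w ⟨d - 1, by omega⟩)
    (hrec : ∀ i : ℕ, ∀ _hi : i + 1 < d, ∀ w ∈ E,
      r i w = w ⟨i, by omega⟩ * (N (i + 1) + 1) + r (i + 1) w)
    (hM : ∀ i : ℕ, ∀ w ∈ E, |r i w| ≤ M i)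
    (hN : ∀ i : ℕ, (n : ℤ) * M i ≤ N i)
    (ws : List (Fin d → ℤ)) (hws : ∀ w ∈ ws, w ∈ E) (hlen : ws.length ≤ n) :
    ((List.Lex (· < ·) (List.ofFn fun j : Fin d => (ws.map fun w => w j).sum)
        (List.replicate d (0 : ℤ))) ↔ (ws.map (r 0)).sum < 0) ∧
    (((fun j : Fin d => (ws.map fun w => w j).sum) = 0) ↔ (ws.map (r 0)).sum = 0) ∧
    ((List.Lex (· < ·) (List.replicate d (0 : ℤ))
        (List.ofFn fun j : Fin d => (ws.map fun w => w j).sum)) ↔ 0 < (ws.map (r 0)).sum) := by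
  set S : Fin d → ℤ := fun j : Fin d => (ws.map fun w => w j).sum with hS
  -- recursion for sums
  have hsumrec : ∀ i : ℕ, ∀ hi : i + 1 < d,
      (ws.map (r i)).sum = S ⟨i, by omega⟩ * (N (i + 1) + 1) + (ws.map (r (i + 1))).sum := by
    intro i hi
    have h1 : ws.map (r i) =
        ws.map (fun w => w ⟨i, by omega⟩ * (N (i + 1) + 1) + r (i + 1) w) :=
      List.map_congr_left (fun w hw => hrec i hi w (hws w hw))
    rw [h1]
    have h2 : ∀ (l : List (Fin d → ℤ)) (f g : (Fin d → ℤ) → ℤ),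
        (l.map (fun w => f w + g w)).sum = (l.map f).sum + (l.map g).sum := by
      intro l f g
      induction l with
      | nil => simp
      | cons a l ih => simp [ih]; ring
    rw [h2]
    congr 1
    rw [List.sum_map_mul_right]
  have hsumd : (ws.map (r (d - 1))).sum = S ⟨d - 1, by omega⟩ := by
    have : ws.map (r (d - 1)) = ws.map (fun w => w ⟨d - 1, by omega⟩) :=
      List.map_congr_left (fun w hw => hrd w (hws w hw))
    rw [this]
  -- bound on sums, valid whenever ws is nonempty
  have hbound : ws ≠ [] → ∀ i : ℕ, |(ws.map (r i)).sum| ≤ N i := by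
    intro hne i
    obtain ⟨w0, hw0⟩ := List.exists_mem_of_ne_nil ws hne
    have hM0 : 0 ≤ M i := le_trans (abs_nonneg _) (hM i w0 (hws w0 hw0))
    calc |(ws.map (r i)).sum| ≤ ((ws.map (r i)).map abs).sum := abs_list_sum_le _
      _ ≤ ((ws.map (r i)).map abs).length • M i := by
          apply List.sum_le_card_nsmul
          intro x hx
          simp only [List.mem_map] at hx
          obtain ⟨y, hy, rfl⟩ := hx
          obtain ⟨w, hw, rfl⟩ := hy
          exact hM i w (hws w hw)
      _ = (ws.length : ℤ) * M i := by simp [mul_comm]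
      _ ≤ (n : ℤ) * M i := by
          apply mul_le_mul_of_nonneg_right _ hM0
          exact_mod_cast hlen
      _ ≤ N i := hN i
  -- key zero case
  have key0 : ∀ t : ℕ, ∀ i : ℕ, i + t + 1 = d →
      (∀ j : ℕ, ∀ hj : j < d, i ≤ j → S ⟨j, hj⟩ = 0) → (ws.map (r i)).sum = 0 := by
    intro t
    induction t with
    | zero =>
      intro i hi hz
      have : i = d - 1 := by omega
      subst this
      rw [hsumd]
      exact hz (d - 1) (by omega) le_rfl
    | succ t ih =>
      intro i hi hz
      rw [hsumrec i (by omega), hz i (by omega) le_rfl,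
        ih (i + 1) (by omega) (fun j hj hij => hz j hj (by omega))]
      ring
  -- key negative case
  have keyneg : ∀ t : ℕ, ∀ i : ℕ, i + t + 1 = d →
      (∃ k : ℕ, ∃ hk : k < d, i ≤ k ∧ S ⟨k, hk⟩ < 0 ∧
        ∀ j : ℕ, ∀ hj : j < k, i ≤ j → S ⟨j, hj.trans hk⟩ = 0) →
      (ws.map (r i)).sum < 0 := by
    intro t
    induction t with
    | zero =>
      intro i hi h
      obtain ⟨k, hk, hik, hneg, -⟩ := h
      have hki : k = i := by omega
      have hid : i = d - 1 := by omega
      subst hki hid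
      rw [hsumd]
      convert hneg
    | succ t ih =>
      intro i hi h
      obtain ⟨k, hk, hik, hneg, hz⟩ := h
      have hne : ws ≠ [] := by
        intro h
        rw [hS] at hneg
        simp [h] at hneg
      rcases Nat.lt_or_ge i k with h | h
      · -- S i = 0, recurse
        rw [hsumrec i (by omega), hz i h le_rfl]
        simpa using ih (i + 1) (by omega)
          ⟨k, hk, by omega, hneg, fun j hj hij => hz j hj (by omega)⟩
      · have : k = i := by omega
        subst this
        rw [hsumrec k (by omega)]
        have h1 : S ⟨k, by omega⟩ ≤ -1 := by omega
        have h2 : |(ws.map (r (k + 1))).sum| ≤ N (k + 1) := hbound hne (k + 1)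
        have hNnn : 0 ≤ N (k + 1) := le_trans (abs_nonneg _) h2
        nlinarith [abs_le.mp h2]
  -- key positive case
  have keypos : ∀ t : ℕ, ∀ i : ℕ, i + t + 1 = d →
      (∃ k : ℕ, ∃ hk : k < d, i ≤ k ∧ 0 < S ⟨k, hk⟩ ∧
        ∀ j : ℕ, ∀ hj : j < k, i ≤ j → S ⟨j, hj.trans hk⟩ = 0) →
      0 < (ws.map (r i)).sum := by
    intro t
    induction t with
    | zero =>
      intro i hi h
      obtain ⟨k, hk, hik, hpos, -⟩ := h
      have hki : k = i := by omega
      have hid : i = d - 1 := by omega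
      subst hki hid
      rw [hsumd]
      convert hpos
    | succ t ih =>
      intro i hi h
      obtain ⟨k, hk, hik, hpos, hz⟩ := h
      have hne : ws ≠ [] := by
        intro h
        rw [hS] at hpos
        simp [h] at hpos
      rcases Nat.lt_or_ge i k with h | h
      · rw [hsumrec i (by omega), hz i h le_rfl]
        simpa using ih (i + 1) (by omega)
          ⟨k, hk, by omega, hpos, fun j hj hij => hz j hj (by omega)⟩
      · have : k = i := by omega
        subst this
        rw [hsumrec k (by omega)]
        have h1 : 1 ≤ S ⟨k, by omega⟩ := by omega
        have h2 : |(ws.map (r (k + 1))).sum| ≤ N (k + 1) := hbound hne (k + 1)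
        have hNnn : 0 ≤ N (k + 1) := le_trans (abs_nonneg _) h2
        nlinarith [abs_le.mp h2]
  -- three forward implications
  have himp1 : List.Lex (· < ·) (List.ofFn S) (List.replicate d (0 : ℤ)) →
      (ws.map (r 0)).sum < 0 := by
    intro h
    have h' := lex_lt_zero (List.ofFn S) (by simpa using h)
    obtain ⟨k, hk, hneg, hz⟩ := h'
    rw [List.length_ofFn] at hk
    apply keyneg (d - 1) 0 (by omega)
    refine ⟨k, hk, Nat.zero_le _, ?_, ?_⟩
    · simpa using hneg
    · intro j hj _
      have := hz j hj
      simpa using this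
  have himp3 : List.Lex (· < ·) (List.replicate d (0 : ℤ)) (List.ofFn S) →
      0 < (ws.map (r 0)).sum := by
    intro h
    have h' := zero_lex_lt (List.ofFn S) (by simpa using h)
    obtain ⟨k, hk, hpos, hz⟩ := h'
    rw [List.length_ofFn] at hk
    apply keypos (d - 1) 0 (by omega)
    refine ⟨k, hk, Nat.zero_le _, ?_, ?_⟩
    · simpa using hpos
    · intro j hj _
      have := hz j hj
      simpa using this
  have himp2 : S = 0 → (ws.map (r 0)).sum = 0 := by
    intro h
    apply key0 (d - 1) 0 (by omega)
    intro j hj _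
    exact congrFun h ⟨j, hj⟩
  -- equality of lists vs functions
  have heq : (List.ofFn S = List.replicate d (0 : ℤ)) ↔ S = 0 := by
    rw [show List.replicate d (0 : ℤ) = List.ofFn (fun _ : Fin d => 0) by simp,
      List.ofFn_inj]
    constructor
    · intro h; funext j; exact congrFun h j
    · intro h; funext j; exact congrFun h j
  -- trichotomy
  have htri := trichotomous_of (List.Lex ((· < ·) : ℤ → ℤ → Prop))
    (List.ofFn S) (List.replicate d (0 : ℤ))
  refine ⟨⟨himp1, ?_⟩, ⟨himp2, ?_⟩, ⟨himp3, ?_⟩⟩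
  · intro h
    rcases htri with h' | h' | h'
    · exact h'
    · exact absurd (himp2 (heq.mp h')) (by omega)
    · exact absurd (himp3 h') (by omega)
  · intro h
    rcases htri with h' | h' | h'
    · exact absurd (himp1 h') (by omega)
    · exact heq.mp h'
    · exact absurd (himp3 h') (by omega)
  · intro h
    rcases htri with h' | h' | h'
    · exact absurd (himp1 h') (by omega)
    · exact absurd (himp2 (heq.mp h')) (by omega)
    · exact h'
end

section
/- Let (w_i)_{i≥1} be a sequence in ℤ^d with ‖w_i‖_∞ ≤ W for all i, and suppose the sequence can be decomposed (via cycle decomposition) into blocks C_1, C_2, ... plus residual simple paths of total weight bounded in norm by B, such that each block's total weight is lexicographically < 0. Let k* be the least coordinate that is the leading dimension of infinitely many blocks (the leading dimension of a block is the least coordinate where its total weight is nonzero). Then: (a) for every ℓ < k*, liminf_n Σ_{j=1}^n w_j(ℓ) < +∞; and (b) limsup_n Σ_{j=1}^n w_j(k*) = −∞. -/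
open Filter

/-- Core of positional determinacy of lexicographic energy games: if a sequence of
weights decomposes into blocks each of lexicographically negative total weight
(up to a residual of norm at most `B`), and `k` is the least coordinate that is the
leading dimension of infinitely many blocks, then the partial sums have finite
liminf on every coordinate `l < k` and limsup `-∞` on coordinate `k`. -/
theorem stmt5 (d : ℕ) (w : ℕ → Fin d → ℤ) (W B : ℤ)
    (hW : ∀ i j, |w i j| ≤ W)
    (b : ℕ → ℕ) (hb : StrictMono b)
    (C : ℕ → Fin d → ℤ)
    (hC : ∀ i j, C i j = ∑ t ∈ Finset.Ico (b i) (b (i + 1)), w t j)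
    (lead : ℕ → Fin d)
    (hlead : ∀ i, C i (lead i) < 0 ∧ ∀ l, l < lead i → C i l = 0)
    (cnt : ℕ → ℕ) (hcnt : Monotone cnt) (hcnt' : Tendsto cnt atTop atTop)
    (hres : ∀ n j, |(∑ t ∈ Finset.range n, w t j) - ∑ i ∈ Finset.range (cnt n), C i j| ≤ B)
    (k : Fin d) (hk : {i | lead i = k}.Infinite)
    (hmin : ∀ k' : Fin d, k' < k → {i | lead i = k'}.Finite) :
    (∀ l : Fin d, l < k → ∃ c : ℤ, ∃ᶠ n in atTop, (∑ t ∈ Finset.range n, w t l) ≤ c) ∧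
    Tendsto (fun n => ∑ t ∈ Finset.range n, w t k) atTop atBot := by

  classical
  have hF : {i | lead i < k}.Finite := by
    have hsub : {i | lead i < k} ⊆ ⋃ k' ∈ Set.Iio k, {i | lead i = k'} := by
      intro i hi
      exact Set.mem_biUnion hi rfl
    exact Set.Finite.subset ((Set.finite_Iio k).biUnion fun k' hk' => hmin k' hk') hsub
  set Fs : Finset ℕ := hF.toFinset with hFsdef
  have hFsmem : ∀ i, i ∈ Fs ↔ lead i < k := fun i => hF.mem_toFinset
  -- Bound for l < k
  have bound1 : ∀ (l : Fin d), l < k → ∀ m : ℕ,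
      ∑ i ∈ Finset.range m, C i l ≤ ∑ i ∈ Fs, |C i l| := by
    intro l hl m
    have h1 : ∑ i ∈ Finset.range m, C i l
        = ∑ i ∈ (Finset.range m).filter (fun i => i ∈ Fs), C i l := by
      rw [Finset.sum_filter_of_ne]
      intro i _ hne
      by_contra hnot
      have hge : ¬ lead i < k := fun h => hnot ((hFsmem i).mpr h)
      exact hne ((hlead i).2 l (lt_of_lt_of_le hl (not_lt.mp hge)))
    rw [h1]
    calc ∑ i ∈ (Finset.range m).filter (fun i => i ∈ Fs), C i l
        ≤ ∑ i ∈ (Finset.range m).filter (fun i => i ∈ Fs), |C i l| :=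
          Finset.sum_le_sum fun i _ => le_abs_self _
      _ ≤ ∑ i ∈ Fs, |C i l| := by
          apply Finset.sum_le_sum_of_subset_of_nonneg
          · intro i hi
            exact (Finset.mem_filter.mp hi).2
          · intro i _ _
            exact abs_nonneg _
  -- the count function
  set g : ℕ → ℕ := fun m => ((Finset.range m).filter (fun i => lead i = k)).card with hgdef
  have hgmono : Monotone g := by
    intro m m' hmm
    exact Finset.card_le_card (Finset.filter_subset_filter _
      (Finset.range_subset_range.mpr hmm))
  have hgtop : Tendsto g atTop atTop := by
    apply tendsto_atTop_atTop_of_monotone hgmono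
    intro N
    obtain ⟨t, hts, htc⟩ := hk.exists_subset_card_eq N
    refine ⟨t.sup id + 1, ?_⟩
    have : t ⊆ (Finset.range (t.sup id + 1)).filter (fun i => lead i = k) := by
      intro i hi
      refine Finset.mem_filter.mpr ⟨Finset.mem_range.mpr ?_, hts hi⟩
      exact Nat.lt_succ_of_le (Finset.le_sup (f := id) hi)
    calc N = t.card := htc.symm
      _ ≤ g (t.sup id + 1) := Finset.card_le_card this
  -- Bound for k
  have bound2 : ∀ m : ℕ,
      ∑ i ∈ Finset.range m, C i k ≤ (∑ i ∈ Fs, |C i k|) - (g m : ℤ) := by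
    intro m
    have hsplit := Finset.sum_filter_add_sum_filter_not (Finset.range m)
      (fun i => i ∈ Fs) (fun i => C i k)
    have hA : ∑ i ∈ (Finset.range m).filter (fun i => i ∈ Fs), C i k
        ≤ ∑ i ∈ Fs, |C i k| := by
      calc ∑ i ∈ (Finset.range m).filter (fun i => i ∈ Fs), C i k
          ≤ ∑ i ∈ (Finset.range m).filter (fun i => i ∈ Fs), |C i k| :=
            Finset.sum_le_sum fun i _ => le_abs_self _
        _ ≤ ∑ i ∈ Fs, |C i k| := by
            apply Finset.sum_le_sum_of_subset_of_nonneg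
            · intro i hi
              exact (Finset.mem_filter.mp hi).2
            · intro i _ _
              exact abs_nonneg _
    have hB : ∑ i ∈ (Finset.range m).filter (fun i => ¬ i ∈ Fs), C i k
        ≤ -(g m : ℤ) := by
      have hsplit2 := Finset.sum_filter_add_sum_filter_not
        ((Finset.range m).filter (fun i => ¬ i ∈ Fs))
        (fun i => lead i = k) (fun i => C i k)
      have heq : ((Finset.range m).filter (fun i => ¬ i ∈ Fs)).filter
          (fun i => lead i = k) = (Finset.range m).filter (fun i => lead i = k) := by
        ext i
        simp only [Finset.mem_filter, Finset.mem_range]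
        constructor
        · rintro ⟨⟨h1, _⟩, h3⟩
          exact ⟨h1, h3⟩
        · rintro ⟨h1, h3⟩
          refine ⟨⟨h1, ?_⟩, h3⟩
          intro hmem
          exact absurd h3 (ne_of_lt ((hFsmem i).mp hmem))
      have h1 : ∑ i ∈ ((Finset.range m).filter (fun i => ¬ i ∈ Fs)).filter
          (fun i => lead i = k), C i k ≤ -(g m : ℤ) := by
        rw [heq]
        calc ∑ i ∈ (Finset.range m).filter (fun i => lead i = k), C i k
            ≤ ∑ _i ∈ (Finset.range m).filter (fun i => lead i = k), (-1 : ℤ) := by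
              apply Finset.sum_le_sum
              intro i hi
              have hli := (Finset.mem_filter.mp hi).2
              have := (hlead i).1
              rw [hli] at this
              omega
          _ = -(g m : ℤ) := by simp [hgdef, mul_comm]
      have h2 : ∑ i ∈ ((Finset.range m).filter (fun i => ¬ i ∈ Fs)).filter
          (fun i => ¬ lead i = k), C i k = 0 := by
        apply Finset.sum_eq_zero
        intro i hi
        have h3 := Finset.mem_filter.mp hi
        have h4 := Finset.mem_filter.mp h3.1
        have h5 : ¬ lead i < k := fun h => h4.2 ((hFsmem i).mpr h)
        have h6 : k < lead i := lt_of_le_of_ne (not_lt.mp h5) (Ne.symm h3.2)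
        exact (hlead i).2 k h6
      linarith [hsplit2, h1, h2]
    linarith [hsplit, hA, hB]
  constructor
  · intro l hl
    refine ⟨B + ∑ i ∈ Fs, |C i l|, Frequently.of_forall fun n => ?_⟩
    have h1 := hres n l
    have h2 := bound1 l hl (cnt n)
    have := abs_le.mp h1
    linarith [this.2]
  · have hle : ∀ n : ℕ, (∑ t ∈ Finset.range n, w t k)
        ≤ B + (∑ i ∈ Fs, |C i k|) - (g (cnt n) : ℤ) := by
      intro n
      have h1 := abs_le.mp (hres n k)
      have h2 := bound2 (cnt n)
      linarith [h1.2]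
    have hgc : Tendsto (fun n => (g (cnt n) : ℤ)) atTop atTop :=
      tendsto_natCast_atTop_atTop.comp (hgtop.comp hcnt')
    have hbot : Tendsto (fun n => B + (∑ i ∈ Fs, |C i k|) - (g (cnt n) : ℤ))
        atTop atBot := by
      apply tendsto_atBot_add_const_left
      exact tendsto_neg_atTop_atBot.comp hgc
    exact tendsto_atBot_mono hle hbot
end

section
/- If a tuple (g_1, ..., g_k) of vectors in ℚ^d represents a partially perfect half space whose denotation {a : a · (g_1,...,g_k) ≺ 0} is disjoint from the nonnegative orthant ℚ_{≥0}^d, then for every c ∈ ℚ^d and all bounds a_ℓ ≤ b_ℓ (ℓ = 1,...,k−1), the set {x · g_k : x ∈ ℚ^d, c + x ≥ 0 componentwise, and a_ℓ ≤ x · g_ℓ ≤ b_ℓ for all ℓ < k} is bounded below. -/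
/-!
The recession cone of the polyhedron `{x : c + x ≥ 0, a ≤ x ⬝ᵥ g_ℓ ≤ b (ℓ < k)}` is
`{y ≥ 0 : y ⬝ᵥ g_ℓ = 0 (ℓ < k)}`, and `y ⬝ᵥ g_k ≥ 0` on it: otherwise `y` would be a nonnegative
vector in the lexicographically negative half space. By Farkas' lemma `g_k` is therefore a
nonnegative combination of the constraint normals, which bounds `x ⬝ᵥ g_k` below on the polyhedron.
-/

open Matrix

section Farkas

variable {𝕜 ι n : Type*} [Field 𝕜] [LinearOrder 𝕜] [IsStrictOrderedRing 𝕜] [Fintype n]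

lemma dotProduct_nonneg_of_mem_hull {w : n → 𝕜} {S : Set (n → 𝕜)} (hS : ∀ v ∈ S, 0 ≤ w ⬝ᵥ v)
    {u : n → 𝕜} (hu : u ∈ PointedCone.hull 𝕜 S) : 0 ≤ w ⬝ᵥ u := by
  induction hu using Submodule.span_induction with
  | mem v hv => exact hS v hv
  | zero => simp
  | add u v _ _ hu hv => rw [dotProduct_add]; exact add_nonneg hu hv
  | smul t u _ hu => rw [← Nonneg.coe_smul, dotProduct_smul, smul_eq_mul]; exact mul_nonneg t.2 hu

/-- The projection onto the hyperplane `w ⬝ᵥ · = 0` along `v`, when `w ⬝ᵥ v ≠ 0`. -/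
def projAlong (w v : n → 𝕜) : (n → 𝕜) →ₗ[𝕜] (n → 𝕜) where
  toFun u := u - (w ⬝ᵥ u / w ⬝ᵥ v) • v
  map_add' u u' := by simp only [dotProduct_add, add_div, add_smul]; abel
  map_smul' t u := by
    simp only [dotProduct_smul, smul_eq_mul, mul_div_assoc, smul_sub, smul_smul]; rfl

lemma dotProduct_projAlong (w v y u : n → 𝕜) :
    y ⬝ᵥ projAlong w v u = (y - (y ⬝ᵥ v / w ⬝ᵥ v) • w) ⬝ᵥ u := by
  simp only [projAlong, LinearMap.coe_mk, AddHom.coe_mk, dotProduct_sub, sub_dotProduct,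
    dotProduct_smul, smul_dotProduct, smul_eq_mul]
  ring

lemma exists_mem_hull_projAlong_eq {w v g : n → 𝕜} {S : Set (n → 𝕜)}
    (hg : projAlong w v g ∈ PointedCone.hull 𝕜 (projAlong w v '' S)) :
    ∃ h ∈ PointedCone.hull 𝕜 S, projAlong w v h = projAlong w v g := by
  rw [← LinearMap.coe_restrictScalars {c : 𝕜 // 0 ≤ c}, PointedCone.hull,
    Submodule.span_image] at hg
  exact hg

/-- **Farkas' lemma**. In the inductive step, a functional `w` separating `g` from the smaller
cone is negative on the new generator; projecting along it onto `ker w` reduces to the smaller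
cone. -/
theorem mem_hull_of_forall_dotProduct_nonneg (s : Finset ι) (A : ι → n → 𝕜) (g : n → 𝕜)
    (h : ∀ y : n → 𝕜, (∀ i ∈ s, 0 ≤ y ⬝ᵥ A i) → 0 ≤ y ⬝ᵥ g) :
    g ∈ PointedCone.hull 𝕜 (A '' s) := by
  classical
  induction s using Finset.induction_on generalizing A g with
  | empty =>
    have hgg : g ⬝ᵥ g = 0 := le_antisymm (by simpa using h (-g) (by simp))
      (Finset.sum_nonneg fun i _ => mul_self_nonneg (g i))
    simp [dotProduct_self_eq_zero.mp hgg]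
  | insert j s _ ih =>
    have hmono : PointedCone.hull 𝕜 (A '' s) ≤ PointedCone.hull 𝕜 (A '' insert j s) :=
      Submodule.span_mono (Set.image_mono (by simp))
    by_cases hs : ∀ y : n → 𝕜, (∀ i ∈ s, 0 ≤ y ⬝ᵥ A i) → 0 ≤ y ⬝ᵥ g
    · rw [Finset.coe_insert]
      exact hmono (ih A g hs)
    push Not at hs
    obtain ⟨w, hw, hwg⟩ := hs
    have hwj : w ⬝ᵥ A j < 0 := by
      by_contra! hwj
      exact hwg.not_ge (h w (by simpa [hwj] using hw))
    set P := projAlong w (A j)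
    obtain ⟨k, hk, hPk⟩ : ∃ k ∈ PointedCone.hull 𝕜 (A '' s), P k = P g := by
      refine exists_mem_hull_projAlong_eq ?_
      rw [← Set.image_comp]
      refine ih _ _ fun y hy => ?_
      rw [dotProduct_projAlong]
      refine h _ (Finset.forall_mem_insert _ _ _ |>.mpr ⟨?_, fun i hi => ?_⟩)
      · rw [sub_dotProduct, smul_dotProduct, smul_eq_mul, div_mul_cancel₀ _ hwj.ne, sub_self]
      · rw [← dotProduct_projAlong]; exact hy i hi
    have hwk : 0 ≤ w ⬝ᵥ k := dotProduct_nonneg_of_mem_hull (by simpa using hw) hk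
    have ht : 0 ≤ (w ⬝ᵥ g - w ⬝ᵥ k) / w ⬝ᵥ A j := div_nonneg_of_nonpos (by linarith) hwj.le
    have hg : g = k + ((w ⬝ᵥ g - w ⬝ᵥ k) / w ⬝ᵥ A j) • A j := by
      simp only [P, projAlong, LinearMap.coe_mk, AddHom.coe_mk] at hPk
      rw [sub_div, sub_smul, add_sub, add_sub_right_comm, hPk, sub_add_cancel]
    rw [hg, Finset.coe_insert, ← Nonneg.mk_smul _ ht]
    exact add_mem (hmono hk) (Submodule.smul_mem _ _ (Submodule.subset_span (by simp)))

theorem bddBelow_dotProduct_of_forall_dotProduct_nonneg [Fintype ι] (A : ι → n → 𝕜) (b : ι → 𝕜)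
    (g : n → 𝕜) (h : ∀ y : n → 𝕜, (∀ i, 0 ≤ y ⬝ᵥ A i) → 0 ≤ y ⬝ᵥ g) :
    BddBelow ((· ⬝ᵥ g) '' {x | ∀ i, b i ≤ x ⬝ᵥ A i}) := by
  have hg := mem_hull_of_forall_dotProduct_nonneg Finset.univ A g (by simpa using h)
  rw [Finset.coe_univ, Set.image_univ, PointedCone.hull,
    Submodule.mem_span_range_iff_exists_fun] at hg
  obtain ⟨c, rfl⟩ := hg
  refine ⟨∑ i, (c i : 𝕜) * b i, ?_⟩
  rintro _ ⟨x, hx, rfl⟩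
  simp only [dotProduct_sum, ← Nonneg.coe_smul, dotProduct_smul, smul_eq_mul]
  exact Finset.sum_le_sum fun i _ => mul_le_mul_of_nonneg_left (hx i) (c i).2

end Farkas

lemma List.lex_ofFn_replicate {α : Type*} {r : α → α → Prop} {m : ℕ} {f : Fin (m + 1) → α}
    {z : α} (hinit : ∀ l : Fin m, f l.castSucc = z) (hlast : r (f (Fin.last m)) z) :
    List.Lex r (List.ofFn f) (List.replicate (m + 1) z) := by
  rw [List.ofFn_succ', List.concat_eq_append, List.replicate_succ', funext hinit, List.ofFn_const]
  exact List.Lex.append_left r (List.Lex.rel hlast) _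

lemma dotProduct_last_nonneg_of_disjoint {d m : ℕ} {G : Fin (m + 1) → Fin d → ℚ}
    (hdisj : Disjoint
      {a : Fin d → ℚ |
        List.Lex (· < ·) (List.ofFn fun j => a ⬝ᵥ G j) (List.replicate (m + 1) (0 : ℚ))}
      {a : Fin d → ℚ | ∀ i, 0 ≤ a i})
    {y : Fin d → ℚ} (hy : ∀ i, 0 ≤ y i) (hinit : ∀ l : Fin m, y ⬝ᵥ G l.castSucc = 0) :
    0 ≤ y ⬝ᵥ G (Fin.last m) := by
  by_contra! hlast
  exact Set.disjoint_left.mp hdisj (List.lex_ofFn_replicate hinit hlast) hy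

/-- If the denotation of a partially perfect half space `(g_1, ..., g_k)` is disjoint
from the nonnegative orthant, then for every `c` and bounds `a_l ≤ b_l` the set
`{x · g_k : c + x ≥ 0, a_l ≤ x · g_l ≤ b_l for l < k}` is bounded below. -/
theorem stmt10 (d m : ℕ) (G : Fin (m + 1) → Fin d → ℚ)
    (hdisj : Disjoint
      {a : Fin d → ℚ |
        List.Lex (· < ·) (List.ofFn fun j => a ⬝ᵥ G j) (List.replicate (m + 1) (0 : ℚ))}
      {a : Fin d → ℚ | ∀ i, 0 ≤ a i}) :
    ∀ (c : Fin d → ℚ) (a b : Fin m → ℚ), (∀ l, a l ≤ b l) →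
      ∃ L : ℚ, ∀ x : Fin d → ℚ, (∀ i, 0 ≤ c i + x i) →
        (∀ l : Fin m, a l ≤ x ⬝ᵥ G l.castSucc ∧ x ⬝ᵥ G l.castSucc ≤ b l) →
        L ≤ x ⬝ᵥ G (Fin.last m) := by
  intro c a b _
  let A : Fin d ⊕ Fin m ⊕ Fin m → Fin d → ℚ :=
    Sum.elim (Pi.single · 1) (Sum.elim (G ∘ Fin.castSucc) (-G ∘ Fin.castSucc))
  let lo : Fin d ⊕ Fin m ⊕ Fin m → ℚ := Sum.elim (-c) (Sum.elim a (-b))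
  have hrec : ∀ y, (∀ k, 0 ≤ y ⬝ᵥ A k) → 0 ≤ y ⬝ᵥ G (Fin.last m) := fun y hy =>
    dotProduct_last_nonneg_of_disjoint hdisj (fun i => by simpa [A] using hy (.inl i))
      fun l => le_antisymm (by simpa [A] using hy (.inr (.inr l)))
        (by simpa [A] using hy (.inr (.inl l)))
  obtain ⟨L, hL⟩ := bddBelow_dotProduct_of_forall_dotProduct_nonneg A lo _ hrec
  refine ⟨L, fun x hx hxG => hL ⟨x, ?_, rfl⟩⟩
  rintro (i | l | l)
  · simpa [A, lo, neg_le_iff_add_nonneg, add_comm] using hx i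
  · simpa [A, lo] using (hxG l).1
  · simpa [A, lo] using (hxG l).2
end

section
/- Let (C_i)_{i≥1} be the cycles of the stack-based cycle decomposition of an infinite walk, and suppose the stack height attains a minimum value h infinitely often after some index i_h. Then for any two cycles C and C' emitted after step i_h, there exists a finite sequence of cycles C = C_1, ..., C_n, ..., C_{n+m} = C' from the decomposition such that consecutive cycles in the sequence share at least one common vertex of the walk (specifically each consecutive pair visits a common position of the walk). -/
/-- The stack of walk positions in the stack-based cycle decomposition: push each
position; when the vertex at the pushed position already occurs at some position on
the stack, pop the simple cycle thus formed and push the position back. -/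
def posStack {V : Type*} [DecidableEq V] (v : ℕ → V) : ℕ → List ℕ
  | 0 => [0]
  | n + 1 =>
    let st := posStack v n
    if (st.dropWhile (fun j => decide (v j ≠ v (n + 1)))) = [] then
      (n + 1) :: st
    else
      (n + 1) :: (st.dropWhile (fun j => decide (v j ≠ v (n + 1)))).tail

/-- A simple cycle is emitted at step `n + 1` when the newly visited vertex already
occurs on the stack. -/
def emits {V : Type*} [DecidableEq V] (v : ℕ → V) (n : ℕ) : Prop :=
  ∃ j ∈ posStack v n, v j = v (n + 1)

/-- The start position of the cycle emitted at step `n + 1`. -/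
def startIdx {V : Type*} [DecidableEq V] (v : ℕ → V) (n : ℕ) : ℕ :=
  ((posStack v n).dropWhile (fun j => decide (v j ≠ v (n + 1)))).headD 0

/-!
Track a position on the stack. When it is popped while position `t + 1` is pushed, it lies in
the cycle closed at that step, whose end position `t + 1` takes its place. So every cycle is
chained by overlapping cycles to a cycle whose end position is on the stack at any later time.
The part of the stack below an entry never changes while that entry is on the stack, so an entry
strictly below the top of a stack of height `h` was pushed at height `< h`. Hence at a time
`T > i_h` of minimal height `h` the tracked position is the top `T` itself, and any two cycles
are chained through the cycle closed at `T`.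
-/

open List Relation

section
variable {V : Type*} [DecidableEq V] (v : ℕ → V)

lemma posStack_succ (n : ℕ) :
    ∃ r, r <:+ posStack v n ∧ posStack v (n + 1) = (n + 1) :: r := by
  simp only [posStack]
  split
  · exact ⟨_, suffix_refl _, rfl⟩
  · exact ⟨_, (tail_suffix _).trans (dropWhile_suffix _), rfl⟩

lemma posStack_succ_of_not_emits {n : ℕ} (h : ¬ emits v n) :
    posStack v (n + 1) = (n + 1) :: posStack v n := by
  have hnil : (posStack v n).dropWhile (fun j => decide (v j ≠ v (n + 1))) = [] := by
    rw [dropWhile_eq_nil_iff]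
    intro j hj
    simpa using fun hv => h ⟨j, hj, hv⟩
  simp only [posStack]
  rw [if_pos hnil]

lemma posStack_eq_append_startIdx {n : ℕ} (h : emits v n) :
    ∃ l r, posStack v n = l ++ startIdx v n :: r ∧ posStack v (n + 1) = (n + 1) :: r := by
  obtain ⟨a, r, hdrop⟩ : ∃ a r,
      (posStack v n).dropWhile (fun j => decide (v j ≠ v (n + 1))) = a :: r := by
    refine ne_nil_iff_exists_cons.mp fun hnil => ?_
    obtain ⟨j, hj, hv⟩ := h
    have := dropWhile_eq_nil_iff.mp hnil j hj
    simp [hv] at this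
  have hstart : startIdx v n = a := by
    unfold startIdx
    rw [hdrop]
    rfl
  refine ⟨(posStack v n).takeWhile (fun j => decide (v j ≠ v (n + 1))), r, ?_, ?_⟩
  · rw [hstart, ← hdrop, takeWhile_append_dropWhile]
  · simp only [posStack, hdrop, reduceCtorEq, if_false, tail_cons]

lemma posStack_eq_cons (t : ℕ) : ∃ l, posStack v t = t :: l := by
  cases t with
  | zero => exact ⟨[], rfl⟩
  | succ n =>
    obtain ⟨r, -, hr⟩ := posStack_succ v n
    exact ⟨r, hr⟩

lemma mem_posStack_self (t : ℕ) : t ∈ posStack v t := by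
  obtain ⟨l, hl⟩ := posStack_eq_cons v t
  simp [hl]

lemma le_of_mem_posStack {t j : ℕ} (hj : j ∈ posStack v t) : j ≤ t := by
  induction t generalizing j with
  | zero => simp_all [posStack]
  | succ n ih =>
    obtain ⟨r, hsuf, hr⟩ := posStack_succ v n
    rw [hr, mem_cons] at hj
    rcases hj with rfl | hj
    · rfl
    · exact (ih (hsuf.subset hj)).trans n.le_succ

lemma posStack_pairwise_gt (t : ℕ) : (posStack v t).Pairwise (· > ·) := by
  induction t with
  | zero => simp [posStack]
  | succ n ih =>
    obtain ⟨r, hsuf, hr⟩ := posStack_succ v n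
    rw [hr, pairwise_cons]
    exact ⟨fun j hj => Nat.lt_succ_of_le (le_of_mem_posStack v (hsuf.subset hj)),
      ih.sublist hsuf.sublist⟩

lemma posStack_of_cons_suffix {t e : ℕ} {s : List ℕ} (h : e :: s <:+ posStack v t) :
    posStack v e = e :: s := by
  induction t with
  | zero =>
    rcases suffix_cons_iff.mp h with h | h
    · simp_all [posStack]
    · simpa using h.length_le
  | succ n ih =>
    obtain ⟨r, hsuf, hr⟩ := posStack_succ v n
    rw [hr] at h
    rcases suffix_cons_iff.mp h with h | h
    · obtain ⟨rfl, rfl⟩ := cons_eq_cons.mp h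
      exact hr
    · exact ih (h.trans hsuf)

lemma length_posStack_lt_of_mem {t j : ℕ} (hj : j ∈ posStack v t) (hjt : j ≠ t) :
    (posStack v j).length < (posStack v t).length := by
  obtain ⟨l, hl⟩ := posStack_eq_cons v t
  rw [hl, mem_cons] at hj
  obtain ⟨l₁, s, rfl⟩ := append_of_mem (hj.resolve_left hjt)
  have hsuf : j :: s <:+ posStack v t :=
    hl ▸ (suffix_append l₁ (j :: s)).trans (suffix_cons t _)
  rw [posStack_of_cons_suffix v hsuf, hl]
  simp

lemma startIdx_le {t : ℕ} (h : emits v t) : startIdx v t ≤ t := by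
  obtain ⟨l, r, hst, -⟩ := posStack_eq_append_startIdx v h
  exact le_of_mem_posStack v (hst ▸ mem_append_right l mem_cons_self)

lemma emits_and_startIdx_le_of_mem_of_not_mem {t j : ℕ} (hj : j ∈ posStack v t)
    (hj' : j ∉ posStack v (t + 1)) : emits v t ∧ startIdx v t ≤ j := by
  by_cases hem : emits v t
  · obtain ⟨l, r, hst, hsucc⟩ := posStack_eq_append_startIdx v hem
    refine ⟨hem, ?_⟩
    have hsorted := posStack_pairwise_gt v t
    rw [hst, pairwise_append] at hsorted
    rw [hst, mem_append, mem_cons] at hj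
    rcases hj with hj | rfl | hj
    · exact (hsorted.2.2 j hj _ mem_cons_self).le
    · exact le_rfl
    · exact absurd (hsucc ▸ mem_cons_of_mem _ hj) hj'
  · exact absurd (posStack_succ_of_not_emits v hem ▸ mem_cons_of_mem _ hj) hj'

def CyclesOverlap (a b : ℕ) : Prop :=
  emits v a ∧ emits v b ∧
    (Set.Icc (startIdx v a) (a + 1) ∩ Set.Icc (startIdx v b) (b + 1)).Nonempty

instance : Std.Symm (CyclesOverlap v) where
  symm _ _ := fun ⟨ha, hb, hab⟩ => ⟨hb, ha, Set.inter_comm _ _ ▸ hab⟩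

lemma exists_reflTransGen_cyclesOverlap_succ_mem {a t : ℕ} (ha : emits v a) (hat : a + 1 ≤ t) :
    ∃ b, a ≤ b ∧ ReflTransGen (CyclesOverlap v) a b ∧ b + 1 ∈ posStack v t := by
  induction t, hat using Nat.le_induction with
  | base => exact ⟨a, le_rfl, ReflTransGen.refl, mem_posStack_self v _⟩
  | succ t hat ih =>
    obtain ⟨b, hab, hchain, hb⟩ := ih
    by_cases hb' : b + 1 ∈ posStack v (t + 1)
    · exact ⟨b, hab, hchain, hb'⟩
    obtain ⟨hem, hstart⟩ := emits_and_startIdx_le_of_mem_of_not_mem v hb hb'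
    have hbt : b + 1 ≤ t := le_of_mem_posStack v hb
    have hemb : emits v b := by
      rcases hchain.cases_tail with rfl | ⟨c, -, hcb⟩
      exacts [ha, hcb.2.1]
    refine ⟨t, by omega, hchain.tail ⟨hemb, hem, b + 1, ?_, ?_⟩, mem_posStack_self v _⟩
    · exact ⟨(startIdx_le v hemb).trans b.le_succ, le_rfl⟩
    · exact ⟨hstart, by omega⟩

lemma reflTransGen_cyclesOverlap_of_length_eq {h ih m a : ℕ}
    (hmin : ∀ n ≥ ih, h ≤ (posStack v n).length) (hm : (posStack v (m + 1)).length = h)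
    (ha : ih < a) (hea : emits v a) (ham : a ≤ m) :
    ReflTransGen (CyclesOverlap v) a m := by
  obtain ⟨b, hab, hchain, hb⟩ :=
    exists_reflTransGen_cyclesOverlap_succ_mem v (t := m + 1) hea (by omega)
  obtain rfl : b = m := by
    by_contra hbm
    have := length_posStack_lt_of_mem v hb (by omega)
    have := hmin (b + 1) (by omega)
    omega
  exact hchain

end

lemma Relation.ReflTransGen.exists_seq {α : Type*} {r : α → α → Prop} {a b : α}
    (h : ReflTransGen r a b) :
    ∃ (p : ℕ) (f : ℕ → α), f 0 = a ∧ f p = b ∧ ∀ i < p, r (f i) (f (i + 1)) := by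
  induction h using ReflTransGen.head_induction_on with
  | refl => exact ⟨0, fun _ => b, rfl, rfl, by simp⟩
  | @head a c hac _ ih =>
    obtain ⟨p, f, hf0, hfp, hf⟩ := ih
    refine ⟨p + 1, fun | 0 => a | i + 1 => f i, rfl, hfp, fun i hi => ?_⟩
    cases i with
    | zero => simpa [hf0] using hac
    | succ i => exact hf i (by omega)

theorem stmt13_general {V : Type*} [DecidableEq V] (v : ℕ → V)
    (h ih : ℕ)
    (hmin : ∀ n ≥ ih, h ≤ (posStack v n).length)
    (hinf : {n : ℕ | ih ≤ n ∧ (posStack v n).length = h}.Infinite) :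
    ∀ n n' : ℕ, ih < n → ih < n' → emits v n → emits v n' →
      ∃ (p : ℕ) (m : ℕ → ℕ), m 0 = n ∧ m p = n' ∧
        (∀ i ≤ p, emits v (m i)) ∧
        (∀ i < p,
          (Set.Icc (startIdx v (m i)) (m i + 1) ∩
            Set.Icc (startIdx v (m (i + 1))) (m (i + 1) + 1)).Nonempty) := by
  intro n n' hn hn' hen hen'
  obtain ⟨T, ⟨-, hT⟩, hTgt⟩ := hinf.exists_gt (ih + n + n')
  obtain ⟨m, rfl⟩ : ∃ m, T = m + 1 := ⟨T - 1, by omega⟩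
  have hnm := reflTransGen_cyclesOverlap_of_length_eq v hmin hT hn hen (by omega)
  have hn'm := reflTransGen_cyclesOverlap_of_length_eq v hmin hT hn' hen' (by omega)
  obtain ⟨p, f, hf0, hfp, hf⟩ := (hnm.trans (symm hn'm)).exists_seq
  refine ⟨p, f, hf0, hfp, fun i hi => ?_, fun i hi => (hf i hi).2.2⟩
  cases i with
  | zero => exact hf0 ▸ hen
  | succ i => exact (hf i (by omega)).2.1

/-- If after index `i_h` the stack height of the cycle decomposition is always at
least `h` and equals `h` infinitely often, then any two cycles emitted after `i_h`
are connected by a finite sequence of emitted cycles in which consecutive cycles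
visit a common position of the walk. -/
theorem stmt13 {V : Type*} [Fintype V] [DecidableEq V] (v : ℕ → V)
    (h ih : ℕ)
    (hmin : ∀ n ≥ ih, h ≤ (posStack v n).length)
    (hinf : {n : ℕ | ih ≤ n ∧ (posStack v n).length = h}.Infinite) :
    ∀ n n' : ℕ, ih < n → ih < n' → emits v n → emits v n' →
      ∃ (p : ℕ) (m : ℕ → ℕ), m 0 = n ∧ m p = n' ∧
        (∀ i ≤ p, emits v (m i)) ∧
        (∀ i < p,
          (Set.Icc (startIdx v (m i)) (m i + 1) ∩
            Set.Icc (startIdx v (m (i + 1))) (m (i + 1) + 1)).Nonempty) :=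
  stmt13_general v h ih hmin hinf
end

section
/- Let (w_j)_{j≥1} be a sequence in ℤ^d and (H_j)_{j≥1} a sequence of tuples of d vectors each (norm-bounded). Define the interleaved 2d-dimensional sequence x_j = e_{H_j,H_{j+1}} ⧢ (w_j · H_j), where e_{H,H'}(i) ∈ {0,1} flags whether the i-th components of H and H' differ, and (a ⧢ b)(2i−1) = a(i), (a ⧢ b)(2i) = b(i). Then the lexicographic energy winning condition holds for (x_j) (i.e., there is k ≤ 2d with limsup_n Σ_{j≤n} x_j(k) = −∞ and liminf_n Σ_{j≤n} x_j(ℓ) < +∞ for ℓ < k) if and only if there exist k̂ ≤ d, an index i, and vectors g_1, …, g_{k̂} such that (g_1,...,g_{k̂}) is a prefix of H_j for all j ≥ i, limsup_n Σ_{j≤n} w_j · g_{k̂} = −∞, and liminf_n Σ_{j≤n} w_j · g_ℓ < +∞ for all ℓ < k̂. -/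
/-!
A flag coordinate of the interleaved play is `0` or `1`, so its partial sums are nondecreasing;
they stay bounded exactly when the corresponding component of `H_j` is eventually constant, and
they can never tend to `-∞`. Hence a winning coordinate `k` of the lexicographic energy condition
is a weight coordinate `2m + 1`, and the bounded flag coordinates `0, 2, …, 2m` below it say that
the prefix `(h_{j,0}, …, h_{j,m})` of `H_j` stabilises to some `(g_0, …, g_m)`. From then on the
weight coordinate `2l + 1` of the play is `w_j · g_l`, and changing finitely many terms shifts the
partial sums by a constant, which affects neither condition. The converse reads the same argument
backwards.
-/

open Matrix Filter Finset

/-- `e_{H_j,H_{j+1}} ⧢ (w_j · H_j)`, indexed from `0`: entry `2l` is the flag of component `l`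
and entry `2l + 1` the weight `w_j · h_{j,l}`. -/
def interleavedPlay {d : ℕ} (w : ℕ → Fin d → ℤ) (H : ℕ → Fin d → Fin d → ℤ) :
    ℕ → Fin (2 * d) → ℤ := fun j i =>
  let l : Fin d := ⟨i.val / 2, Nat.div_lt_of_lt_mul i.isLt⟩
  if i.val % 2 = 0 then (if H j l = H (j + 1) l then 0 else 1) else w j ⬝ᵥ H j l

def PartialSumsTendstoAtBot (f : ℕ → ℤ) : Prop :=
  Tendsto (fun n => ∑ j ∈ range n, f j) atTop atBot

/-- `liminf_n ∑_{j<n} f j < ∞`. -/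
def PartialSumsFrequentlyBounded (f : ℕ → ℤ) : Prop :=
  ∃ c : ℤ, ∃ᶠ n in atTop, ∑ j ∈ range n, f j ≤ c

def LexEnergyWin {ι : Type*} [LT ι] (x : ℕ → ι → ℤ) : Prop :=
  ∃ k, PartialSumsTendstoAtBot (x · k) ∧ ∀ l < k, PartialSumsFrequentlyBounded (x · l)

/-- `g l` stands for the paper's `g_{l+1}`. -/
def PerfectHalfSpaceWin {d : ℕ} (w : ℕ → Fin d → ℤ) (H : ℕ → Fin d → Fin d → ℤ) : Prop :=
  ∃ kh : ℕ, 0 < kh ∧ kh ≤ d ∧ ∃ i : ℕ, ∃ g : ℕ → Fin d → ℤ,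
    (∀ j ≥ i, ∀ l : Fin d, l.val < kh → H j l = g l.val) ∧
    PartialSumsTendstoAtBot (fun j => w j ⬝ᵥ g (kh - 1)) ∧
    ∀ l < kh - 1, PartialSumsFrequentlyBounded (fun j => w j ⬝ᵥ g l)

section PartialSums

variable {f g : ℕ → ℤ}

theorem exists_sum_range_eq_add_const_of_eventually_eq (h : ∀ᶠ j in atTop, f j = g j) :
    ∃ c, ∀ᶠ n in atTop, ∑ j ∈ range n, g j = ∑ j ∈ range n, f j + c := by
  obtain ⟨i, hi⟩ := eventually_atTop.1 h
  refine ⟨∑ j ∈ range i, (g j - f j), eventually_atTop.2 ⟨i, fun n hn => ?_⟩⟩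
  have hdiff : ∑ j ∈ range n, (g j - f j) = ∑ j ∈ range i, (g j - f j) :=
    (sum_subset (range_subset_range.2 hn) fun j _ hj =>
      by rw [hi j (not_lt.1 (mem_range.not.1 hj)), sub_self]).symm
  rw [← hdiff, sum_sub_distrib]
  ring

theorem PartialSumsTendstoAtBot.congr (hf : PartialSumsTendstoAtBot f)
    (h : ∀ᶠ j in atTop, f j = g j) : PartialSumsTendstoAtBot g := by
  obtain ⟨c, hc⟩ := exists_sum_range_eq_add_const_of_eventually_eq h
  exact (tendsto_atBot_add_const_right _ c hf).congr' (hc.mono fun _ hn => hn.symm)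

theorem PartialSumsFrequentlyBounded.congr (hf : PartialSumsFrequentlyBounded f)
    (h : ∀ᶠ j in atTop, f j = g j) : PartialSumsFrequentlyBounded g := by
  obtain ⟨b, hb⟩ := hf
  obtain ⟨c, hc⟩ := exists_sum_range_eq_add_const_of_eventually_eq h
  exact ⟨b + c, (hb.and_eventually hc).mono fun _ ⟨hle, heq⟩ => by rw [heq]; linarith⟩

theorem PartialSumsFrequentlyBounded.of_eventually_eq_zero (h : ∀ᶠ j in atTop, f j = 0) :
    PartialSumsFrequentlyBounded f :=
  PartialSumsFrequentlyBounded.congr ⟨0, Frequently.of_forall fun _ => by simp⟩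
    (h.mono fun _ hj => hj.symm)

theorem not_partialSumsTendstoAtBot_of_nonneg (hf : ∀ j, 0 ≤ f j) :
    ¬ PartialSumsTendstoAtBot f := fun h =>
  let ⟨_, hn⟩ := (h.eventually (eventually_lt_atBot 0)).exists
  (sum_nonneg fun j _ => hf j).not_gt hn

/-- Monotone bounded integer sequences are eventually constant. -/
theorem PartialSumsFrequentlyBounded.eventually_eq_zero (hf : ∀ j, 0 ≤ f j)
    (h : PartialSumsFrequentlyBounded f) : ∀ᶠ j in atTop, f j = 0 := by
  obtain ⟨c, hc⟩ := h
  have hmono : Monotone fun n => ∑ j ∈ range n, f j :=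
    monotone_nat_of_le_succ fun n => by rw [sum_range_succ]; exact le_add_of_nonneg_right (hf n)
  have hbdd : BddAbove (Set.range fun n => ∑ j ∈ range n, f j) := by
    refine ⟨c, Set.forall_mem_range.2 fun n => ?_⟩
    obtain ⟨m, hm, hnm⟩ := (hc.and_eventually (eventually_ge_atTop n)).exists
    exact (hmono hnm).trans hm
  have hconst : EventuallyConst (fun n => ∑ j ∈ range n, f j) atTop :=
    .of_tendsto (nhds_discrete ℤ ▸ tendsto_atTop_ciSup hmono hbdd)
  obtain ⟨i, hi⟩ := eventuallyConst_atTop_nat.1 hconst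
  exact eventually_atTop.2 ⟨i, fun n hn => by simpa [sum_range_succ] using hi n hn⟩

end PartialSums

theorem exists_forall_ge_eq_of_eventually_succ_eq {ι α : Type*} [Finite ι] {a : ℕ → ι → α}
    {p : ι → Prop} (h : ∀ l, p l → ∀ᶠ j in atTop, a (j + 1) l = a j l) :
    ∃ i, ∀ j ≥ i, ∀ l, p l → a j l = a i l := by
  have hconst : EventuallyConst (fun j (l : Subtype p) => a j l) atTop :=
    eventuallyConst_atTop_nat.2 <| eventually_atTop.1 <|
      (eventually_all.2 fun l : Subtype p => h l l.2).mono fun _ hj => funext hj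
  obtain ⟨i, hi⟩ := eventuallyConst_atTop.1 hconst
  exact ⟨i, fun j hj l hl => congrFun (hi j hj) ⟨l, hl⟩⟩

theorem Fin.exists_eq_two_mul_or_two_mul_add_one {d : ℕ} (k : Fin (2 * d)) :
    ∃ l : Fin d, k = ⟨2 * l, by omega⟩ ∨ k = ⟨2 * l + 1, by omega⟩ :=
  ⟨⟨k / 2, by omega⟩, by
    rcases Nat.mod_two_eq_zero_or_one k with h | h <;> [left; right] <;> ext <;> simp <;> omega⟩

section InterleavedPlay

variable {d : ℕ} {w : ℕ → Fin d → ℤ} {H : ℕ → Fin d → Fin d → ℤ}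

theorem interleavedPlay_two_mul (j : ℕ) (l : Fin d) :
    interleavedPlay w H j ⟨2 * l, by omega⟩ = if H j l = H (j + 1) l then 0 else 1 := by
  simp [interleavedPlay]

theorem interleavedPlay_two_mul_add_one (j : ℕ) (l : Fin d) :
    interleavedPlay w H j ⟨2 * l + 1, by omega⟩ = w j ⬝ᵥ H j l := by
  simp [interleavedPlay, Nat.add_mod, Nat.add_div]

theorem interleavedPlay_two_mul_nonneg (j : ℕ) (l : Fin d) :
    0 ≤ interleavedPlay w H j ⟨2 * l, by omega⟩ := by
  rw [interleavedPlay_two_mul]; split_ifs <;> simp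

theorem perfectHalfSpaceWin_of_lexEnergyWin (h : LexEnergyWin (interleavedPlay w H)) :
    PerfectHalfSpaceWin w H := by
  obtain ⟨k, hk, hbelow⟩ := h
  obtain ⟨m, rfl | rfl⟩ := k.exists_eq_two_mul_or_two_mul_add_one
  · exact absurd hk <|
      not_partialSumsTendstoAtBot_of_nonneg fun j => interleavedPlay_two_mul_nonneg j m
  have hstable : ∀ l : Fin d, l ≤ m → ∀ᶠ j in atTop, H (j + 1) l = H j l := by
    intro l hl
    have hflag := (hbelow ⟨2 * l, by omega⟩ (by simp [Fin.lt_def]; omega)).eventually_eq_zero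
      fun j => interleavedPlay_two_mul_nonneg j l
    filter_upwards [hflag] with j hj
    rw [interleavedPlay_two_mul] at hj
    split_ifs at hj with heq
    exacts [heq.symm, absurd hj one_ne_zero]
  obtain ⟨i, hi⟩ := exists_forall_ge_eq_of_eventually_succ_eq hstable
  set g : ℕ → Fin d → ℤ := fun n => if hn : n < d then H i ⟨n, hn⟩ else 0
  have hg : ∀ j ≥ i, ∀ l : Fin d, l ≤ m → H j l = g l := fun j hj l hl => by
    simp [g, hi j hj l hl]
  have hweight : ∀ l : Fin d, l ≤ m →
      ∀ᶠ j in atTop, interleavedPlay w H j ⟨2 * l + 1, by omega⟩ = w j ⬝ᵥ g l := fun l hl =>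
    eventually_atTop.2 ⟨i, fun j hj => by rw [interleavedPlay_two_mul_add_one, hg j hj l hl]⟩
  refine ⟨m + 1, m.val.succ_pos, m.isLt, i, g, fun j hj l hl => hg j hj l (by omega), ?_,
    fun l hl => ?_⟩
  · exact hk.congr (hweight m le_rfl)
  · have hld : l < d := by omega
    exact (hbelow ⟨2 * l + 1, by omega⟩ (by simp [Fin.lt_def]; omega)).congr
      (hweight ⟨l, hld⟩ (by simp [Fin.le_def]; omega))

theorem lexEnergyWin_of_perfectHalfSpaceWin (h : PerfectHalfSpaceWin w H) :
    LexEnergyWin (interleavedPlay w H) := by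
  obtain ⟨kh, hkh, hkhd, i, g, hg, htend, hbelow⟩ := h
  have hprefix : ∀ᶠ j in atTop, ∀ l : Fin d, l.val < kh → H j l = g l ∧ H (j + 1) l = g l :=
    eventually_atTop.2 ⟨i, fun j hj l hl => ⟨hg j hj l hl, hg (j + 1) (by omega) l hl⟩⟩
  have hweight : ∀ l : Fin d, l.val < kh →
      ∀ᶠ j in atTop, w j ⬝ᵥ g l = interleavedPlay w H j ⟨2 * l + 1, by omega⟩ := fun l hl =>
    hprefix.mono fun j hj => by rw [interleavedPlay_two_mul_add_one, (hj l hl).1]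
  refine ⟨⟨2 * (kh - 1) + 1, by omega⟩, htend.congr (hweight ⟨kh - 1, by omega⟩ (by simp; omega)),
    fun k hk => ?_⟩
  obtain ⟨l, rfl | rfl⟩ := k.exists_eq_two_mul_or_two_mul_add_one <;> simp only [Fin.lt_def] at hk
  · refine .of_eventually_eq_zero (hprefix.mono fun j hj => ?_)
    rw [interleavedPlay_two_mul, if_pos ((hj l (by omega)).1.trans (hj l (by omega)).2.symm)]
  · exact (hbelow l (by omega)).congr (hweight l (by omega))

theorem lexEnergyWin_interleavedPlay_iff :
    LexEnergyWin (interleavedPlay w H) ↔ PerfectHalfSpaceWin w H :=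
  ⟨perfectHalfSpaceWin_of_lexEnergyWin, lexEnergyWin_of_perfectHalfSpaceWin⟩

end InterleavedPlay

/-- Correctness of the translation from perfect half space games to lexicographic
energy games, at the level of plays: the lexicographic energy winning condition for
the interleaved `2d`-dimensional sequence of flag vectors and normalised weights
holds iff the perfect half space winning condition holds for the original sequence. -/
theorem stmt16 (d : ℕ) (w : ℕ → Fin d → ℤ)
    (H : ℕ → Fin d → Fin d → ℤ) :
    let x : ℕ → Fin (2 * d) → ℤ := fun j i =>
      if i.val % 2 = 0 then
        (if H j ⟨i.val / 2, by have := i.isLt; omega⟩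
            = H (j + 1) ⟨i.val / 2, by have := i.isLt; omega⟩ then 0 else 1)
      else w j ⬝ᵥ H j ⟨i.val / 2, by have := i.isLt; omega⟩
    ((∃ k : Fin (2 * d),
        Tendsto (fun n => ∑ j ∈ Finset.range n, x j k) atTop atBot ∧
        ∀ l : Fin (2 * d), l < k →
          ∃ c : ℤ, ∃ᶠ n in atTop, (∑ j ∈ Finset.range n, x j l) ≤ c) ↔
      (∃ kh : ℕ, 0 < kh ∧ kh ≤ d ∧ ∃ i : ℕ, ∃ g : ℕ → Fin d → ℤ,
        (∀ j ≥ i, ∀ l : Fin d, l.val < kh → H j l = g l.val) ∧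
        Tendsto (fun n => ∑ j ∈ Finset.range n, w j ⬝ᵥ g (kh - 1)) atTop atBot ∧
        ∀ l : ℕ, l < kh - 1 →
          ∃ c : ℤ, ∃ᶠ n in atTop, (∑ j ∈ Finset.range n, w j ⬝ᵥ g l) ≤ c)) :=
  lexEnergyWin_interleavedPlay_iff
end

section
/- Let (w_j)_{j≥1} be a sequence in ℤ^d that decomposes (after a finite prefix of total weight bounded in norm) into consecutive blocks C_1, C_2, ..., each with an associated total weight w(C_i) ∈ ℤ^d and a nonempty tuple P = (p_1, ..., p_m) of vectors such that w(C_i) · P ⪯ 0 lexicographically for every i, and infinitely many i satisfy w(C_i) · P ≺ 0. Let k* ∈ {1,...,m} be minimal such that infinitely many blocks satisfy w(C_i)·p_{k*} < 0 and w(C_i)·p_ℓ = 0 for all ℓ < k*. Then limsup_n Σ_{j=1}^n w_j · p_{k*} = −∞ and liminf_n Σ_{j=1}^n w_j · p_ℓ < +∞ for all ℓ < k*. -/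
open Matrix Filter


private lemma lex_replicate_ofFn : ∀ {m : ℕ} (v : Fin m → ℤ) (l : Fin m),
    0 < v l → (∀ l', l' < l → v l' = 0) →
    List.Lex (· < ·) (List.replicate m 0) (List.ofFn v)
  | 0, _, l, _, _ => absurd l.2 (Nat.not_lt_zero _)
  | (n+1), v, l, hpos, hz => by
    rw [List.ofFn_succ, List.replicate_succ]
    cases l using Fin.cases with
    | zero => exact List.Lex.rel hpos
    | succ l' =>
      rw [hz 0 (Fin.succ_pos l')]
      exact List.Lex.cons (lex_replicate_ofFn (fun j => v j.succ) l' hpos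
        (fun l'' h => hz l''.succ (Fin.succ_lt_succ_iff.mpr h)))


/-- Concluding argument of the reduction from bounding games to perfect half space
games: if a weight sequence decomposes into blocks whose total weights satisfy
`w(C_i) · P ⪯ 0` lexicographically, infinitely many strictly, `k` is the least
coordinate of `P` witnessing strictness infinitely often, and residuals are bounded,
then the partial sums of `w_j · p_k` have limsup `-∞` and those of `w_j · p_l`
(`l < k`) have finite liminf. -/
theorem stmt17 (d m : ℕ) (w : ℕ → Fin d → ℤ) (W B : ℤ)
    (hW : ∀ j i, |w j i| ≤ W)
    (b : ℕ → ℕ) (hb : StrictMono b)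
    (C : ℕ → Fin d → ℤ)
    (hCdef : ∀ i j, C i j = ∑ t ∈ Finset.Ico (b i) (b (i + 1)), w t j)
    (P : Fin m → Fin d → ℤ) (hm : 0 < m)
    (hnonpos : ∀ i, ¬ List.Lex (· < ·) (List.replicate m (0 : ℤ))
      (List.ofFn fun l => C i ⬝ᵥ P l))
    (hstrict : {i : ℕ | List.Lex (· < ·) (List.ofFn fun l => C i ⬝ᵥ P l)
      (List.replicate m (0 : ℤ))}.Infinite)
    (k : Fin m)
    (hk : {i : ℕ | C i ⬝ᵥ P k < 0 ∧ ∀ l : Fin m, l < k → C i ⬝ᵥ P l = 0}.Infinite)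
    (hkmin : ∀ k' : Fin m, k' < k →
      {i : ℕ | C i ⬝ᵥ P k' < 0 ∧ ∀ l : Fin m, l < k' → C i ⬝ᵥ P l = 0}.Finite)
    (cnt : ℕ → ℕ) (hcnt : Monotone cnt) (hcnt' : Tendsto cnt atTop atTop)
    (hres : ∀ n j, |(∑ t ∈ Finset.range n, w t j) - ∑ i ∈ Finset.range (cnt n), C i j| ≤ B) :
    Tendsto (fun n => ∑ j ∈ Finset.range n, w j ⬝ᵥ P k) atTop atBot ∧
    ∀ l : Fin m, l < k →
      ∃ c : ℤ, ∃ᶠ n in atTop, (∑ j ∈ Finset.range n, w j ⬝ᵥ P l) ≤ c := by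
  -- key consequence of lexicographic nonpositivity
  have key : ∀ i (l : Fin m), (∀ l', l' < l → C i ⬝ᵥ P l' = 0) → C i ⬝ᵥ P l ≤ 0 := by
    intro i l hzero
    by_contra hpos
    push_neg at hpos
    exact hnonpos i (lex_replicate_ofFn (fun l => C i ⬝ᵥ P l) l hpos hzero)
  -- finite union of the exceptional sets
  have hSfin : (⋃ k' ∈ {k' : Fin m | k' < k},
      {i : ℕ | C i ⬝ᵥ P k' < 0 ∧ ∀ l : Fin m, l < k' → C i ⬝ᵥ P l = 0}).Finite :=
    Set.Finite.biUnion (Set.toFinite _) (fun k' hk' => hkmin k' hk')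
  obtain ⟨N1, hN1⟩ := hSfin.bddAbove
  set N0 := N1 + 1 with hN0def
  have hFout : ∀ i, N0 ≤ i → (∀ l : Fin m, l < k → C i ⬝ᵥ P l = 0) ∧ C i ⬝ᵥ P k ≤ 0 := by
    intro i hi
    have hnot : ∀ k' : Fin m, k' < k →
        ¬ (C i ⬝ᵥ P k' < 0 ∧ ∀ l : Fin m, l < k' → C i ⬝ᵥ P l = 0) := by
      intro k' hk' hmem
      have hiF : i ∈ (⋃ k' ∈ {k' : Fin m | k' < k},
          {i : ℕ | C i ⬝ᵥ P k' < 0 ∧ ∀ l : Fin m, l < k' → C i ⬝ᵥ P l = 0}) :=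
        Set.mem_biUnion hk' hmem
      have := hN1 hiF
      omega
    have hzaux : ∀ n : ℕ, ∀ l : Fin m, l.val = n → l < k → C i ⬝ᵥ P l = 0 := by
      intro n
      induction n using Nat.strong_induction_on with
      | _ n ih =>
        intro l hl hlk
        have hzlt : ∀ l', l' < l → C i ⬝ᵥ P l' = 0 := by
          intro l' h
          have hv : l'.val < n := by rw [← hl]; exact h
          exact ih l'.val hv l' rfl (h.trans hlk)
        rcases (key i l hzlt).lt_or_eq with hlt | he
        · exact absurd ⟨hlt, hzlt⟩ (hnot l hlk)
        · exact he
    have hz : ∀ l : Fin m, l < k → C i ⬝ᵥ P l = 0 := fun l h => hzaux l.val l rfl h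
    exact ⟨hz, key i k hz⟩
  -- error bound between partial sums and block sums
  have herr : ∀ n (l : Fin m),
      |(∑ t ∈ Finset.range n, w t ⬝ᵥ P l) - ∑ i ∈ Finset.range (cnt n), C i ⬝ᵥ P l|
        ≤ ∑ j, B * |P l j| := by
    intro n l
    have h1 : (∑ t ∈ Finset.range n, w t ⬝ᵥ P l) - ∑ i ∈ Finset.range (cnt n), C i ⬝ᵥ P l
        = ∑ j, ((∑ t ∈ Finset.range n, w t j) - ∑ i ∈ Finset.range (cnt n), C i j) * P l j := by
      simp only [dotProduct]
      rw [Finset.sum_comm, Finset.sum_comm (s := Finset.range (cnt n)),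
        ← Finset.sum_sub_distrib]
      refine Finset.sum_congr rfl fun j _ => ?_
      rw [← Finset.sum_mul, ← Finset.sum_mul, ← sub_mul]
    rw [h1]
    refine (Finset.abs_sum_le_sum_abs _ _).trans (Finset.sum_le_sum fun j _ => ?_)
    rw [abs_mul]
    exact mul_le_mul_of_nonneg_right (hres n j) (abs_nonneg _)
  constructor
  · -- limsup -∞ for coordinate k
    have hTmono : ∀ a c : ℕ, N0 ≤ a → a ≤ c →
        (∑ i ∈ Finset.range c, C i ⬝ᵥ P k) ≤ ∑ i ∈ Finset.range a, C i ⬝ᵥ P k := by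
      intro a c ha hac
      have h1 : ∑ i ∈ Finset.Ico a c, C i ⬝ᵥ P k
          = (∑ i ∈ Finset.range c, C i ⬝ᵥ P k) - ∑ i ∈ Finset.range a, C i ⬝ᵥ P k :=
        Finset.sum_Ico_eq_sub _ hac
      have h2 : ∑ i ∈ Finset.Ico a c, C i ⬝ᵥ P k ≤ 0 := by
        refine Finset.sum_nonpos fun i hi => ?_
        exact (hFout i (ha.trans (Finset.mem_Ico.mp hi).1)).2
      omega
    have hdec : ∀ j : ℕ, ∃ N, N0 ≤ N ∧ ∀ N', N ≤ N' →
        (∑ i ∈ Finset.range N', C i ⬝ᵥ P k) ≤ (∑ i ∈ Finset.range N0, C i ⬝ᵥ P k) - j := by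
      intro j
      induction j with
      | zero => exact ⟨N0, le_rfl, fun N' h => by simpa using hTmono N0 N' le_rfl h⟩
      | succ j ih =>
        obtain ⟨N, hN0N, hN⟩ := ih
        obtain ⟨i, hiS, hNi⟩ := hk.exists_gt N
        refine ⟨i + 1, by omega, fun N' hN' => ?_⟩
        have h1 := hTmono (i + 1) N' (by omega) hN'
        have h2 : (∑ t ∈ Finset.range (i + 1), C t ⬝ᵥ P k)
            = (∑ t ∈ Finset.range i, C t ⬝ᵥ P k) + C i ⬝ᵥ P k :=
          Finset.sum_range_succ _ i
        have h3 := hN i hNi.le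
        have h4 : C i ⬝ᵥ P k ≤ -1 := by have := hiS.1; omega
        push_cast
        push_cast at h3
        omega
    rw [tendsto_atBot]
    intro c
    obtain ⟨N, hNN0, hN⟩ :=
      hdec ((∑ i ∈ Finset.range N0, C i ⬝ᵥ P k) + (∑ j, B * |P k j|) - c).toNat
    filter_upwards [hcnt'.eventually_ge_atTop N] with n hn
    have h1 := abs_le.mp (herr n k)
    have h2 := hN (cnt n) hn
    omega
  · -- bounded liminf for coordinates below k
    intro l hlk
    refine ⟨(∑ i ∈ Finset.range N0, C i ⬝ᵥ P l) + (∑ j, B * |P l j|),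
      Filter.Eventually.frequently ?_⟩
    filter_upwards [hcnt'.eventually_ge_atTop N0] with n hn
    have h2 : ∑ i ∈ Finset.range (cnt n), C i ⬝ᵥ P l = ∑ i ∈ Finset.range N0, C i ⬝ᵥ P l := by
      have h3 : ∑ i ∈ Finset.Ico N0 (cnt n), C i ⬝ᵥ P l
          = (∑ i ∈ Finset.range (cnt n), C i ⬝ᵥ P l) - ∑ i ∈ Finset.range N0, C i ⬝ᵥ P l :=
        Finset.sum_Ico_eq_sub _ hn
      have h4 : ∑ i ∈ Finset.Ico N0 (cnt n), C i ⬝ᵥ P l = 0 := by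
        refine Finset.sum_eq_zero fun i hi => ?_
        exact (hFout i (Finset.mem_Ico.mp hi).1).1 l hlk
      omega
    have h1 := abs_le.mp (herr n l)
    omega
end
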